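/- arXiv:0905.4166 — 2 statements merged into one kernel-verified Lean document; each statement's English description precedes it below -/
import Mathlib

section
/- Let E be a Hausdorff topological real vector space, and let X₁, X₂ ⊆ E be linear subspaces, each endowed with a norm making it a Banach space whose inclusion map into E is continuous. Let f : X₁ + X₂ → X₁ + X₂ be a map such that f(X₁) ⊆ X₁ and f(X₂) ⊆ X₂, and such that the restriction of f to X_i is a contraction for the norm of X_i (Lipschitz with constant k_i < 1), for i = 1,2. If z ∈ X₁ is a fixed point of f (f(z) = z), then z ∈ X₂. -/
/-!
The pairs `(x₁, x₂)` with `ι₁ x₁ = ι₂ x₂` form a closed subset `S` of the Banach space `X₁ × X₂`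
(a copy of `X₁ ∩ X₂`), and `S` is invariant under the contraction `f₁ × f₂`. Hence the fixed point
of `f₁ × f₂` lies in `S`; its first component is a fixed point of `f₁`, hence equal to `z`, and
its second component is the required preimage of `z` in `X₂`.
-/

open scoped NNReal
open Function Set

theorem LipschitzWith.prodMap {α β γ δ : Type*} [PseudoEMetricSpace α] [PseudoEMetricSpace β]
    [PseudoEMetricSpace γ] [PseudoEMetricSpace δ] {Kf Kg : ℝ≥0} {f : α → β} {g : γ → δ}
    (hf : LipschitzWith Kf f) (hg : LipschitzWith Kg g) :
    LipschitzWith (max Kf Kg) (Prod.map f g) := by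
  have h := (hf.comp LipschitzWith.prod_fst).prodMk (hg.comp LipschitzWith.prod_snd)
  rwa [mul_one, mul_one] at h

namespace ContractingWith

theorem prodMap {α β : Type*} [EMetricSpace α] [EMetricSpace β] {K₁ K₂ : ℝ≥0}
    {f₁ : α → α} {f₂ : β → β} (hf₁ : ContractingWith K₁ f₁) (hf₂ : ContractingWith K₂ f₂) :
    ContractingWith (max K₁ K₂) (Prod.map f₁ f₂) :=
  ⟨max_lt hf₁.1 hf₂.1, hf₁.2.prodMap hf₂.2⟩

theorem exists_isFixedPt_mem_of_isClosed {α : Type*} [MetricSpace α] [CompleteSpace α]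
    {K : ℝ≥0} {f : α → α} (hf : ContractingWith K f) {s : Set α} (hs : IsClosed s)
    (hsf : MapsTo f s s) (hne : s.Nonempty) : ∃ y ∈ s, IsFixedPt f y := by
  obtain ⟨x, hx⟩ := hne
  obtain ⟨y, hys, hy, -⟩ :=
    exists_fixedPoint' hs.isComplete hsf (hf.restrict hsf) hx (edist_ne_top x (f x))
  exact ⟨y, hys, hy⟩

end ContractingWith

theorem fixed_point_in_second_space_general
    {E X₁ X₂ : Type*}
    [AddCommGroup E] [Module ℝ E] [TopologicalSpace E]
    [T2Space E]
    [NormedAddCommGroup X₁] [NormedSpace ℝ X₁] [CompleteSpace X₁]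
    [NormedAddCommGroup X₂] [NormedSpace ℝ X₂] [CompleteSpace X₂]
    (ι₁ : X₁ →L[ℝ] E) (ι₂ : X₂ →L[ℝ] E)
    (f : E → E)
    (f₁ : X₁ → X₁) (hf₁ : ∀ x : X₁, f (ι₁ x) = ι₁ (f₁ x))
    (f₂ : X₂ → X₂) (hf₂ : ∀ x : X₂, f (ι₂ x) = ι₂ (f₂ x))
    (k₁ k₂ : ℝ≥0) (hk₁ : k₁ < 1) (hk₂ : k₂ < 1)
    (hL₁ : LipschitzWith k₁ f₁) (hL₂ : LipschitzWith k₂ f₂)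
    (z : X₁) (hz : f₁ z = z) :
    ∃ w : X₂, ι₂ w = ι₁ z := by
  have hC₁ : ContractingWith k₁ f₁ := ⟨hk₁, hL₁⟩
  have hC₂ : ContractingWith k₂ f₂ := ⟨hk₂, hL₂⟩
  let S : Set (X₁ × X₂) := {p | ι₁ p.1 = ι₂ p.2}
  have hS_closed : IsClosed S :=
    isClosed_eq (ι₁.continuous.comp continuous_fst) (ι₂.continuous.comp continuous_snd)
  have hS_invariant : MapsTo (Prod.map f₁ f₂) S S := fun p (hp : ι₁ p.1 = ι₂ p.2) =>
    show ι₁ (f₁ p.1) = ι₂ (f₂ p.2) by rw [← hf₁, ← hf₂, hp]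
  obtain ⟨⟨x₁, x₂⟩, hx : ι₁ x₁ = ι₂ x₂, hfix⟩ :=
    (hC₁.prodMap hC₂).exists_isFixedPt_mem_of_isClosed hS_closed hS_invariant
      ⟨0, by simp [S]⟩
  have hx₁ : x₁ = z := hC₁.fixedPoint_unique' ((isFixedPt_prodMap _).1 hfix).1 hz
  exact ⟨x₂, by rw [← hx, hx₁]⟩

/-- If `X₁, X₂` are Banach spaces continuously and injectively included in a
Hausdorff topological vector space `E`, `f : X₁ + X₂ → X₁ + X₂` restricts to a
contraction of each `X_i`, and `z ∈ X₁` is a fixed point of `f`, then `z ∈ X₂`. -/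
theorem fixed_point_in_second_space
    {E X₁ X₂ : Type*}
    [AddCommGroup E] [Module ℝ E] [TopologicalSpace E]
    [IsTopologicalAddGroup E] [ContinuousSMul ℝ E] [T2Space E]
    [NormedAddCommGroup X₁] [NormedSpace ℝ X₁] [CompleteSpace X₁]
    [NormedAddCommGroup X₂] [NormedSpace ℝ X₂] [CompleteSpace X₂]
    (ι₁ : X₁ →L[ℝ] E) (ι₂ : X₂ →L[ℝ] E)
    (hι₁ : Function.Injective ι₁) (hι₂ : Function.Injective ι₂)
    (f : E → E)
    (hf : Set.MapsTo f
      ((LinearMap.range (ι₁ : X₁ →ₗ[ℝ] E) ⊔ LinearMap.range (ι₂ : X₂ →ₗ[ℝ] E) : Submodule ℝ E) : Set E)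
      ((LinearMap.range (ι₁ : X₁ →ₗ[ℝ] E) ⊔ LinearMap.range (ι₂ : X₂ →ₗ[ℝ] E) : Submodule ℝ E) : Set E))
    (f₁ : X₁ → X₁) (hf₁ : ∀ x : X₁, f (ι₁ x) = ι₁ (f₁ x))
    (f₂ : X₂ → X₂) (hf₂ : ∀ x : X₂, f (ι₂ x) = ι₂ (f₂ x))
    (k₁ k₂ : ℝ≥0) (hk₁ : k₁ < 1) (hk₂ : k₂ < 1)
    (hL₁ : LipschitzWith k₁ f₁) (hL₂ : LipschitzWith k₂ f₂)
    (z : X₁) (hz : f₁ z = z) :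
    ∃ w : X₂, ι₂ w = ι₁ z :=
  fixed_point_in_second_space_general ι₁ ι₂ f f₁ hf₁ f₂ hf₂ k₁ k₂ hk₁ hk₂ hL₁ hL₂ z hz
end

section
/- Let d ≥ 1, r > 0 and σ ∈ (0,1). There is a constant C > 0 depending only on d, r, σ such that for every bounded σ-Hölder function f : ℝ^d → ℝ (so that ‖f‖_{C^σ} < ∞), one has ‖f‖_{L^∞} ≤ C · N_r(f)^{σ/(r+σ)} · ‖f‖_{C^σ}^{r/(r+σ)}. -/
open MeasureTheory Real Filter
open scoped ENNReal NNReal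

noncomputable section

/-- `ℝ^d` as a Euclidean space. -/
abbrev Ed (d : ℕ) := EuclideanSpace ℝ (Fin d)

/-- The Gaussian heat kernel `g_t(x) = (4πt)^{-d/2} exp(-‖x‖²/(4t))` on `ℝ^d`. -/
def heatKernel (d : ℕ) (t : ℝ) (x : Ed d) : ℝ :=
  (4 * π * t) ^ (-(d : ℝ) / 2) * Real.exp (-‖x‖ ^ 2 / (4 * t))

/-- Convolution of the heat kernel with a vector field: `(e^{tΔ}f)(x)`. -/
def heatConv (d : ℕ) (t : ℝ) (f : Ed d → Fin d → ℝ) (x : Ed d) : Fin d → ℝ :=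
  ∫ y, heatKernel d t (x - y) • f y

/-- The Oseen kernel `O_t^{i,j,k}`, kernel of `e^{tΔ}ℙ∂_k` (entry `(i,j)` of the
Leray projection). -/
def oseenKernel (d : ℕ) (t : ℝ) (i j k : Fin d) (x : Ed d) : ℝ :=
  (∫ ξ : Ed d,
    (((if i = j then (1 : ℝ) else 0) : ℂ) - ((ξ i * ξ j : ℝ) : ℂ) / ((‖ξ‖ ^ 2 : ℝ) : ℂ)) *
      (2 * (π : ℂ) * Complex.I * ((ξ k : ℝ) : ℂ)) *
      Complex.exp ((-(4 * π ^ 2 * t * ‖ξ‖ ^ 2) : ℝ) : ℂ) *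
      Complex.exp (2 * (π : ℂ) * Complex.I * ((inner ℝ x ξ : ℝ) : ℂ))).re

/-- The heat-kernel (equivalent) norm `N_r` of the Besov space `B_∞^{-r,∞}`:
`N_r(f) = sup_{0<θ≤1} θ^{r/2} ‖g_θ∗f‖_∞`. -/
def besovNorm (d : ℕ) (r : ℝ) (f : Ed d → Fin d → ℝ) : ℝ≥0∞ :=
  ⨆ θ ∈ Set.Ioc (0 : ℝ) 1,
    ENNReal.ofReal (θ ^ (r / 2)) * eLpNorm (heatConv d θ f) ⊤ volume

/-- `u` is a mild solution of the Navier–Stokes equations on `(0,T)` with initial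
datum `u₀`: for a.e. `t ∈ (0,T)`,
`u_i(t) = g_t∗(u₀)_i − Σ_{j,k} ∫₀ᵗ O_{t−s}^{i,j,k} ∗ (u_k(s)u_j(s)) ds`,
the time integral converging absolutely. -/
structure IsMildSolution (d : ℕ) (T : ℝ) (u₀ : Ed d → Fin d → ℝ)
    (u : ℝ → Ed d → Fin d → ℝ) : Prop where
  meas : AEMeasurable (fun p : ℝ × Ed d => u p.1 p.2)
    (((volume : Measure ℝ).restrict (Set.Ioo 0 T)).prod volume)
  init_conv : ∀ t > (0 : ℝ), ∀ᵐ x ∂(volume : Measure (Ed d)),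
    Integrable (fun y => heatKernel d t (x - y) • u₀ y) volume
  duhamel : ∀ᵐ t ∂((volume : Measure ℝ).restrict (Set.Ioo 0 T)), ∀ i : Fin d,
    ∀ᵐ x ∂(volume : Measure (Ed d)),
      (∀ j k : Fin d, IntegrableOn
        (fun p : ℝ × Ed d =>
          oseenKernel d (t - p.1) i j k (x - p.2) * (u p.1 p.2 k * u p.1 p.2 j))
        (Set.Ioc 0 t ×ˢ Set.univ) (volume.prod volume)) ∧
      u t x i = (∫ y, heatKernel d t (x - y) * u₀ y i)
        - ∑ j, ∑ k, ∫ s in Set.Ioc (0 : ℝ) t, ∫ y,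
            oseenKernel d (t - s) i j k (x - y) * (u s y k * u s y j)

/-- Membership in `L^p([0,T], L^q(ℝ^d))` (`p = ∞` allowed). -/
def MemLpLq (d : ℕ) (T : ℝ) (p q : ℝ≥0∞) (u : ℝ → Ed d → Fin d → ℝ) : Prop :=
  (∀ᵐ t ∂((volume : Measure ℝ).restrict (Set.Ioo 0 T)), eLpNorm (u t) q volume < ⊤) ∧
  (if p = ⊤ then
      essSup (fun t => eLpNorm (u t) q volume) ((volume : Measure ℝ).restrict (Set.Ioo 0 T)) < ⊤
    else ∫⁻ t in Set.Ioo 0 T, eLpNorm (u t) q volume ^ p.toReal < ⊤)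

/-- The Besov path class `P_{r,T}`: for `r < 1` it is
`L^{2/(1-r)}([0,T], B_∞^{-r,∞})`; for `r = 1` it is `C([0,T], B_∞^{-1,∞})`. -/
def InPathClass (d : ℕ) (r T : ℝ) (u : ℝ → Ed d → Fin d → ℝ) : Prop :=
  if r = 1 then
    (∀ t₀ ∈ Set.Icc (0 : ℝ) T, ∀ ε > (0 : ℝ), ∃ δ > (0 : ℝ), ∀ t ∈ Set.Icc (0 : ℝ) T,
      |t - t₀| < δ →
        besovNorm d 1 (fun x => u t x - u t₀ x) < ENNReal.ofReal ε) ∧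
    (⨆ t ∈ Set.Icc (0 : ℝ) T, besovNorm d 1 (u t)) < ⊤
  else
    ∫⁻ t in Set.Ioo 0 T, besovNorm d r (u t) ^ (2 / (1 - r)) < ⊤

/-- The heat-kernel norm `N_r(f) = sup_{0<θ≤1} θ^{r/2} ‖g_θ∗f‖_∞` for a scalar
function `f`. -/
def besovNormS (d : ℕ) (r : ℝ) (f : Ed d → ℝ) : ℝ≥0∞ :=
  ⨆ θ ∈ Set.Ioc (0 : ℝ) 1,
    ENNReal.ofReal (θ ^ (r / 2)) *
      eLpNorm (fun x => ∫ y, heatKernel d θ (x - y) * f y) ⊤ volume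

/-- The norm of bounded `σ`-Hölder functions:
`‖f‖_{C^σ} = ‖f‖_∞ + sup_{x≠y} |f(x)−f(y)|/‖x−y‖^σ`. -/
def holderNormS (d : ℕ) (σ : ℝ) (f : Ed d → ℝ) : ℝ≥0∞ :=
  (⨆ x : Ed d, (‖f x‖₊ : ℝ≥0∞)) +
    ⨆ x : Ed d, ⨆ y : Ed d, ⨆ _ : x ≠ y,
      ENNReal.ofReal (|f x - f y| / ‖x - y‖ ^ σ)


/-!
Mollify with the heat kernel. For `f` σ-Hölder with constant `L`, `|f - g_θ ∗ f| ≤ c_d L θ^{σ/2}`,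
since the σ-th moment of `g_θ` is `O(θ^{σ/2})` (the factor `‖x‖^σ` is absorbed by
`e^{‖x‖²/(8θ)}`, which turns `g_θ` into `2^{d/2} g_{2θ}`), while `|g_θ ∗ f| ≤ θ^{-r/2} N_r(f)` for
`θ ≤ 1`. So `|f| ≤ c_d L θ^{σ/2} + θ^{-r/2} N_r(f)` on `(0, 1]`, and the choice
`θ = (N_r(f) / (c_d L))^{2/(r+σ)}` balances the two terms; when this `θ` exceeds `1` the bound
already follows from `‖f‖_∞ ≤ ‖f‖_{C^σ}`.
-/

open Topology

section Mollification

variable {E : Type*} [NormedAddCommGroup E] [MeasurableSpace E] [BorelSpace E]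
  {μ : Measure E} [μ.IsAddLeftInvariant] [μ.IsNegInvariant]

theorem abs_sub_integral_kernel_mul_le {k f : E → ℝ} {C s : ℝ≥0} (hs : 0 < s)
    (hk : Integrable k μ) (hk_nonneg : ∀ z, 0 ≤ k z) (hk_one : ∫ z, k z ∂μ = 1)
    (hk_moment : Integrable (fun z => k z * ‖z‖ ^ (s : ℝ)) μ) (hf : HolderWith C s f) (x : E) :
    |f x - ∫ y, k (x - y) * f y ∂μ| ≤ C * ∫ z, k z * ‖z‖ ^ (s : ℝ) ∂μ := by
  have hkx : Integrable (fun y => k (x - y)) μ := hk.comp_sub_left x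
  have hbound : ∀ y, ‖k (x - y) * (f x - f y)‖ ≤ C * (k (x - y) * ‖x - y‖ ^ (s : ℝ)) := by
    intro y
    rw [norm_mul, Real.norm_of_nonneg (hk_nonneg _), mul_left_comm]
    exact mul_le_mul_of_nonneg_left (by simpa [dist_eq_norm] using hf.dist_le x y)
      (hk_nonneg _)
  have hdiff : Integrable (fun y => k (x - y) * (f x - f y)) μ :=
    ((hk_moment.comp_sub_left x).const_mul C).mono'
      (hkx.aestronglyMeasurable.mul (continuous_const.sub (hf.continuous hs)).aestronglyMeasurable)
      (ae_of_all _ hbound)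
  have hsplit : ∫ y, k (x - y) * f y ∂μ = f x - ∫ y, k (x - y) * (f x - f y) ∂μ := by
    have : (fun y => k (x - y) * f y) = fun y => k (x - y) * f x - k (x - y) * (f x - f y) := by
      ext y; ring
    rw [this, integral_sub (hkx.mul_const _) hdiff, integral_mul_const,
      integral_sub_left_eq_self k μ x, hk_one, one_mul]
  calc |f x - ∫ y, k (x - y) * f y ∂μ| = ‖∫ y, k (x - y) * (f x - f y) ∂μ‖ := by
        rw [hsplit, sub_sub_cancel, Real.norm_eq_abs]
    _ ≤ ∫ y, C * (k (x - y) * ‖x - y‖ ^ (s : ℝ)) ∂μ :=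
        norm_integral_le_of_norm_le ((hk_moment.comp_sub_left x).const_mul C) (ae_of_all _ hbound)
    _ = C * ∫ z, k z * ‖z‖ ^ (s : ℝ) ∂μ := by
        rw [integral_const_mul, integral_sub_left_eq_self (fun z => k z * ‖z‖ ^ (s : ℝ)) μ x]

end Mollification

section HeatKernel

variable {d : ℕ} {θ : ℝ}

theorem heatKernel_nonneg (hθ : 0 ≤ θ) (x : Ed d) : 0 ≤ heatKernel d θ x := by
  unfold heatKernel; positivity

theorem integral_heatKernel (hθ : 0 < θ) : ∫ x, heatKernel d θ x = 1 := by
  have h4 : 0 < 4 * π * θ := by positivity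
  have hexp : ∀ x : Ed d, Real.exp (-‖x‖ ^ 2 / (4 * θ)) = Real.exp (-(4 * θ)⁻¹ * ‖x‖ ^ 2) :=
    fun x => by ring_nf
  simp only [heatKernel, hexp, integral_const_mul,
    GaussianFourier.integral_rexp_neg_mul_sq_norm (inv_pos.2 (by positivity : 0 < 4 * θ)),
    finrank_euclideanSpace_fin]
  rw [div_inv_eq_mul, show π * (4 * θ) = 4 * π * θ by ring, ← Real.rpow_add h4, neg_div,
    neg_add_cancel, Real.rpow_zero]

theorem integrable_heatKernel (hθ : 0 < θ) : Integrable (heatKernel d θ) :=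
  .of_integral_ne_zero (by rw [integral_heatKernel hθ]; exact one_ne_zero)

theorem heatKernel_mul_exp_eq (hθ : 0 < θ) (x : Ed d) :
    heatKernel d θ x * Real.exp (‖x‖ ^ 2 / (8 * θ)) =
      2 ^ ((d : ℝ) / 2) * heatKernel d (2 * θ) x := by
  have h4 : 0 < 4 * π * θ := by positivity
  have hpow : (4 * π * θ) ^ (-(d : ℝ) / 2) =
      2 ^ ((d : ℝ) / 2) * (4 * π * (2 * θ)) ^ (-(d : ℝ) / 2) := by
    rw [show 4 * π * (2 * θ) = 2 * (4 * π * θ) by ring, Real.mul_rpow (by norm_num) h4.le,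
      ← mul_assoc, ← Real.rpow_add (by norm_num), neg_div, add_neg_cancel, Real.rpow_zero, one_mul]
  rw [heatKernel, heatKernel, hpow, mul_assoc, mul_assoc, ← Real.exp_add]
  congr 3
  field_simp
  ring

theorem rpow_le_sixteen_mul_exp {v s : ℝ} (hv : 0 ≤ v) (hs0 : 0 ≤ s) (hs1 : s ≤ 1) :
    v ^ s ≤ 16 * Real.exp (v ^ 2 / 8) := by
  have hvs : v ^ s ≤ 1 + v := by
    rcases le_total v 1 with h | h
    · linarith [Real.rpow_le_one hv h hs0]
    · linarith [Real.rpow_le_self_of_one_le h hs1]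
  nlinarith [Real.add_one_le_exp (v ^ 2 / 8)]

theorem heatKernel_mul_norm_rpow_le (hθ : 0 < θ) {s : ℝ} (hs0 : 0 ≤ s) (hs1 : s ≤ 1)
    (x : Ed d) :
    heatKernel d θ x * ‖x‖ ^ s ≤ 16 * 2 ^ ((d : ℝ) / 2) * θ ^ (s / 2) * heatKernel d (2 * θ) x := by
  have hsqrt : 0 < √θ := Real.sqrt_pos.2 hθ
  have hscale : ‖x‖ ^ s = θ ^ (s / 2) * (‖x‖ / √θ) ^ s := by
    rw [Real.div_rpow (norm_nonneg _) hsqrt.le, Real.sqrt_eq_rpow, ← Real.rpow_mul hθ.le,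
      one_div_mul_eq_div, mul_div_cancel₀ _ (by positivity)]
  have hnorm : ‖x‖ ^ s ≤ θ ^ (s / 2) * (16 * Real.exp (‖x‖ ^ 2 / (8 * θ))) := by
    have h := rpow_le_sixteen_mul_exp (div_nonneg (norm_nonneg x) hsqrt.le) hs0 hs1
    rw [div_pow, Real.sq_sqrt hθ.le, div_div, mul_comm θ] at h
    rw [hscale]
    exact mul_le_mul_of_nonneg_left h (by positivity)
  calc heatKernel d θ x * ‖x‖ ^ s
      ≤ heatKernel d θ x * (θ ^ (s / 2) * (16 * Real.exp (‖x‖ ^ 2 / (8 * θ)))) :=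
        mul_le_mul_of_nonneg_left hnorm (heatKernel_nonneg hθ.le x)
    _ = 16 * θ ^ (s / 2) * (heatKernel d θ x * Real.exp (‖x‖ ^ 2 / (8 * θ))) := by ring
    _ = 16 * 2 ^ ((d : ℝ) / 2) * θ ^ (s / 2) * heatKernel d (2 * θ) x := by
        rw [heatKernel_mul_exp_eq hθ]; ring

theorem integrable_heatKernel_mul_norm_rpow (hθ : 0 < θ) {s : ℝ} (hs0 : 0 ≤ s) (hs1 : s ≤ 1) :
    Integrable (fun x : Ed d => heatKernel d θ x * ‖x‖ ^ s) :=
  ((integrable_heatKernel (d := d) (by positivity : 0 < 2 * θ)).const_mul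
      (16 * 2 ^ ((d : ℝ) / 2) * θ ^ (s / 2))).mono'
    (by unfold heatKernel; fun_prop)
    (ae_of_all _ fun x => by
      rw [Real.norm_of_nonneg (mul_nonneg (heatKernel_nonneg hθ.le x) (by positivity))]
      exact heatKernel_mul_norm_rpow_le hθ hs0 hs1 x)

theorem integral_heatKernel_mul_norm_rpow_le (hθ : 0 < θ) {s : ℝ} (hs0 : 0 ≤ s) (hs1 : s ≤ 1) :
    ∫ x : Ed d, heatKernel d θ x * ‖x‖ ^ s ≤ 16 * 2 ^ ((d : ℝ) / 2) * θ ^ (s / 2) :=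
  calc ∫ x : Ed d, heatKernel d θ x * ‖x‖ ^ s
      ≤ ∫ x : Ed d, 16 * 2 ^ ((d : ℝ) / 2) * θ ^ (s / 2) * heatKernel d (2 * θ) x :=
        integral_mono (integrable_heatKernel_mul_norm_rpow hθ hs0 hs1)
          ((integrable_heatKernel (by positivity)).const_mul _)
          (heatKernel_mul_norm_rpow_le hθ hs0 hs1)
    _ = 16 * 2 ^ ((d : ℝ) / 2) * θ ^ (s / 2) := by
        rw [integral_const_mul, integral_heatKernel (by positivity), mul_one]

end HeatKernel

section HolderNorm

variable {d : ℕ} {σ : ℝ} {f : Ed d → ℝ}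

theorem nnnorm_le_holderNormS (x : Ed d) : (‖f x‖₊ : ℝ≥0∞) ≤ holderNormS d σ f :=
  (le_iSup (fun x => (‖f x‖₊ : ℝ≥0∞)) x).trans le_self_add

theorem abs_le_toReal_holderNormS (hf : holderNormS d σ f ≠ ⊤) (x : Ed d) :
    |f x| ≤ (holderNormS d σ f).toReal := by
  rw [← ENNReal.ofReal_le_iff_le_toReal hf, ← Real.norm_eq_abs, ofReal_norm]
  exact nnnorm_le_holderNormS x

theorem holderWith_holderNormS (hσ : 0 ≤ σ) (hf : holderNormS d σ f ≠ ⊤) :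
    HolderWith (holderNormS d σ f).toNNReal σ.toNNReal f := by
  intro x y
  rcases eq_or_ne x y with rfl | hxy
  · simp
  have hquot : ENNReal.ofReal (|f x - f y| / ‖x - y‖ ^ σ) ≤ holderNormS d σ f :=
    (le_iSup₂_of_le x y
      (le_iSup (fun _ => ENNReal.ofReal (|f x - f y| / ‖x - y‖ ^ σ)) hxy)).trans le_add_self
  have hpos : 0 < ‖x - y‖ ^ σ := Real.rpow_pos_of_pos (norm_pos_iff.2 (sub_ne_zero.2 hxy)) σ
  rw [ENNReal.coe_toNNReal hf, Real.coe_toNNReal σ hσ, edist_dist, edist_dist,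
    ENNReal.ofReal_rpow_of_nonneg dist_nonneg hσ, Real.dist_eq, dist_eq_norm,
    ← div_mul_cancel₀ |f x - f y| hpos.ne', ENNReal.ofReal_mul (by positivity)]
  exact mul_le_mul_left hquot _

end HolderNorm

theorem ae_abs_integral_heatKernel_mul_le {d : ℕ} {r θ : ℝ} {f : Ed d → ℝ}
    (hθ : θ ∈ Set.Ioc 0 1) (hN : besovNormS d r f ≠ ⊤) :
    ∀ᵐ x, |∫ y, heatKernel d θ (x - y) * f y| ≤ θ ^ (-(r / 2)) * (besovNormS d r f).toReal := by
  have hθr : 0 < θ ^ (r / 2) := Real.rpow_pos_of_pos hθ.1 _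
  have hsup : ENNReal.ofReal (θ ^ (r / 2)) *
      eLpNorm (fun x => ∫ y, heatKernel d θ (x - y) * f y) ⊤ volume ≤ besovNormS d r f :=
    le_iSup₂_of_le (f := fun θ _ => ENNReal.ofReal (θ ^ (r / 2)) *
      eLpNorm (fun x => ∫ y, heatKernel d θ (x - y) * f y) ⊤ volume) θ hθ le_rfl
  rw [eLpNorm_exponent_top] at hsup
  filter_upwards [ae_le_eLpNormEssSup (μ := volume)
    (f := fun x => ∫ y, heatKernel d θ (x - y) * f y)] with x hx
  rw [Real.rpow_neg hθ.1.le, le_inv_mul_iff₀ hθr, ← ENNReal.ofReal_le_iff_le_toReal hN,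
    ENNReal.ofReal_mul hθr.le, ← Real.norm_eq_abs, ofReal_norm]
  exact (mul_le_mul' le_rfl hx).trans hsup

theorem le_two_mul_rpow_mul_rpow_of_forall_le {r σ A B M : ℝ} (hr : 0 < r) (hσ : 0 < σ)
    (hA : 0 ≤ A) (hB : 0 ≤ B) (hMB : M ≤ B)
    (h : ∀ θ ∈ Set.Ioc (0 : ℝ) 1, M ≤ B * θ ^ (σ / 2) + θ ^ (-(r / 2)) * A) :
    M ≤ 2 * (A ^ (σ / (r + σ)) * B ^ (r / (r + σ))) := by
  have hrσ : 0 < r + σ := by linarith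
  have hab : σ / (r + σ) + r / (r + σ) = 1 := by rw [← add_div, add_comm, div_self hrσ.ne']
  have hsplit : ∀ {x : ℝ}, 0 ≤ x → x = x ^ (σ / (r + σ)) * x ^ (r / (r + σ)) := fun hx => by
    rw [← Real.rpow_add' hx (by rw [hab]; exact one_ne_zero), hab, Real.rpow_one]
  have hprod : 0 ≤ A ^ (σ / (r + σ)) * B ^ (r / (r + σ)) := by positivity
  rcases le_total B A with hBA | hAB
  · have : B ≤ A ^ (σ / (r + σ)) * B ^ (r / (r + σ)) := by
      conv_lhs => rw [hsplit hB]
      gcongr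
    linarith
  rcases hA.eq_or_lt with rfl | hA0
  · have hlim : Tendsto (fun θ : ℝ => B * θ ^ (σ / 2)) (𝓝[>] 0) (𝓝 0) := by
      have hcont : Continuous fun θ : ℝ => B * θ ^ (σ / 2) :=
        continuous_const.mul (Real.continuous_rpow_const (by positivity))
      simpa [Real.zero_rpow (by positivity : σ / 2 ≠ 0)] using
        (hcont.tendsto 0).mono_left nhdsWithin_le_nhds
    have : M ≤ 0 := ge_of_tendsto hlim <| eventually_of_mem (Ioc_mem_nhdsGT one_pos)
      fun θ hθ => by simpa using h θ hθ
    linarith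
  have hB0 : 0 < B := hA0.trans_le hAB
  have hq : 0 < A / B := div_pos hA0 hB0
  have hθ : (A / B) ^ (2 / (r + σ)) ∈ Set.Ioc (0 : ℝ) 1 :=
    ⟨Real.rpow_pos_of_pos hq _, Real.rpow_le_one hq.le ((div_le_one hB0).2 hAB) (by positivity)⟩
  have hfirst : B * ((A / B) ^ (2 / (r + σ))) ^ (σ / 2) =
      A ^ (σ / (r + σ)) * B ^ (r / (r + σ)) := by
    rw [← Real.rpow_mul hq.le, show 2 / (r + σ) * (σ / 2) = σ / (r + σ) by field_simp,
      Real.div_rpow hA hB]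
    nth_rewrite 1 [hsplit hB]
    field_simp
  have hsecond : ((A / B) ^ (2 / (r + σ))) ^ (-(r / 2)) * A =
      A ^ (σ / (r + σ)) * B ^ (r / (r + σ)) := by
    rw [← Real.rpow_mul hq.le, show 2 / (r + σ) * -(r / 2) = -(r / (r + σ)) by field_simp,
      Real.rpow_neg hq.le, Real.div_rpow hA hB]
    nth_rewrite 2 [hsplit hA]
    field_simp
  linarith [h _ hθ]

theorem abs_le_of_holderWith_of_besovNormS_ne_top {d : ℕ} {r θ : ℝ} {C s : ℝ≥0} {f : Ed d → ℝ}
    (hs0 : 0 < s) (hs1 : s ≤ 1) (hf : HolderWith C s f) (hN : besovNormS d r f ≠ ⊤)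
    (hθ : θ ∈ Set.Ioc 0 1) (x : Ed d) :
    |f x| ≤ 16 * 2 ^ ((d : ℝ) / 2) * C * θ ^ ((s : ℝ) / 2) +
      θ ^ (-(r / 2)) * (besovNormS d r f).toReal := by
  have hmoll : ∀ x, |f x - ∫ y, heatKernel d θ (x - y) * f y| ≤
      16 * 2 ^ ((d : ℝ) / 2) * C * θ ^ ((s : ℝ) / 2) := fun x => by
    refine (abs_sub_integral_kernel_mul_le hs0 (integrable_heatKernel hθ.1)
      (heatKernel_nonneg hθ.1.le) (integral_heatKernel hθ.1)
      (integrable_heatKernel_mul_norm_rpow hθ.1 s.2 hs1) hf x).trans ?_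
    calc (C : ℝ) * ∫ z : Ed d, heatKernel d θ z * ‖z‖ ^ (s : ℝ)
        ≤ C * (16 * 2 ^ ((d : ℝ) / 2) * θ ^ ((s : ℝ) / 2)) :=
          mul_le_mul_of_nonneg_left (integral_heatKernel_mul_norm_rpow_le hθ.1 s.2 hs1) C.2
      _ = _ := by ring
  have hae : ∀ᵐ x, |f x| ≤ 16 * 2 ^ ((d : ℝ) / 2) * C * θ ^ ((s : ℝ) / 2) +
      θ ^ (-(r / 2)) * (besovNormS d r f).toReal := by
    filter_upwards [ae_abs_integral_heatKernel_mul_le hθ hN] with x hx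
    linarith [abs_sub_abs_le_abs_sub (f x) (∫ y, heatKernel d θ (x - y) * f y), hmoll x]
  have hall := Measure.dense_of_ae hae
  rw [dense_iff_closure_eq, (isClosed_le (hf.continuous hs0).abs continuous_const).closure_eq]
    at hall
  exact Set.eq_univ_iff_forall.1 hall x

theorem abs_le_besovNormS_rpow_mul_holderNormS_rpow {d : ℕ} {r σ : ℝ} {f : Ed d → ℝ}
    (hr : 0 < r) (hσ0 : 0 < σ) (hσ1 : σ < 1) (hH : holderNormS d σ f ≠ ⊤)
    (hN : besovNormS d r f ≠ ⊤) (x : Ed d) :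
    |f x| ≤ 2 * (16 * 2 ^ ((d : ℝ) / 2)) ^ (r / (r + σ)) *
      (besovNormS d r f).toReal ^ (σ / (r + σ)) * (holderNormS d σ f).toReal ^ (r / (r + σ)) := by
  set c : ℝ := 16 * 2 ^ ((d : ℝ) / 2)
  have hc : 1 ≤ c := by
    nlinarith [Real.one_le_rpow (by norm_num : (1 : ℝ) ≤ 2) (by positivity : 0 ≤ (d : ℝ) / 2)]
  have h := le_two_mul_rpow_mul_rpow_of_forall_le hr hσ0 ENNReal.toReal_nonneg
    (by positivity : 0 ≤ c * (holderNormS d σ f).toReal)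
    ((abs_le_toReal_holderNormS hH x).trans (le_mul_of_one_le_left ENNReal.toReal_nonneg hc))
    fun θ hθ => by
      simpa [Real.coe_toNNReal σ hσ0.le, ENNReal.coe_toNNReal_eq_toReal] using
        abs_le_of_holderWith_of_besovNormS_ne_top (Real.toNNReal_pos.2 hσ0)
          (by simpa using hσ1.le) (holderWith_holderNormS hσ0.le hH) hN hθ x
  rw [Real.mul_rpow (by positivity) ENNReal.toReal_nonneg] at h
  linarith

theorem sup_norm_interpolation_besov_holder_general
    (d : ℕ) (r σ : ℝ) (hr : 0 < r) (hσ : σ ∈ Set.Ioo (0 : ℝ) 1) :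
    ∃ C : ℝ, 0 < C ∧
      ∀ f : Ed d → ℝ, holderNormS d σ f < ⊤ →
        (⨆ x : Ed d, (‖f x‖₊ : ℝ≥0∞)) ≤
          ENNReal.ofReal C * besovNormS d r f ^ (σ / (r + σ)) *
            holderNormS d σ f ^ (r / (r + σ)) := by
  obtain ⟨hσ0, hσ1⟩ := hσ
  refine ⟨2 * (16 * 2 ^ ((d : ℝ) / 2)) ^ (r / (r + σ)), by positivity, fun f hH => ?_⟩
  set H := holderNormS d σ f
  set N := besovNormS d r f
  rcases eq_or_ne H 0 with hH0 | hH0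
  · exact iSup_le fun x => ((nnnorm_le_holderNormS x).trans hH0.le).trans zero_le
  rcases eq_or_ne N ⊤ with hN | hN
  · rw [hN, ENNReal.top_rpow_of_pos (by positivity), ENNReal.mul_top (by positivity),
      ENNReal.top_mul (ENNReal.rpow_pos (pos_iff_ne_zero.2 hH0) hH.ne).ne']
    exact le_top
  refine iSup_le fun x => ?_
  rw [← enorm_eq_nnnorm, ← ofReal_norm, Real.norm_eq_abs, ← ENNReal.ofReal_toReal hN,
    ← ENNReal.ofReal_toReal hH.ne, ENNReal.ofReal_rpow_of_nonneg ENNReal.toReal_nonneg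
      (by positivity), ENNReal.ofReal_rpow_of_nonneg ENNReal.toReal_nonneg (by positivity),
    ← ENNReal.ofReal_mul (by positivity), ← ENNReal.ofReal_mul (by positivity)]
  exact ENNReal.ofReal_le_ofReal
    (abs_le_besovNormS_rpow_mul_holderNormS_rpow hr hσ0 hσ1 hH.ne hN x)

/-- Interpolation inequality
`‖f‖_∞ ≤ C N_r(f)^{σ/(r+σ)} ‖f‖_{C^σ}^{r/(r+σ)}` for bounded `σ`-Hölder `f`. -/
theorem sup_norm_interpolation_besov_holder
    (d : ℕ) (hd : 1 ≤ d) (r σ : ℝ) (hr : 0 < r) (hσ : σ ∈ Set.Ioo (0 : ℝ) 1) :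
    ∃ C : ℝ, 0 < C ∧
      ∀ f : Ed d → ℝ, holderNormS d σ f < ⊤ →
        (⨆ x : Ed d, (‖f x‖₊ : ℝ≥0∞)) ≤
          ENNReal.ofReal C * besovNormS d r f ^ (σ / (r + σ)) *
            holderNormS d σ f ^ (r / (r + σ)) :=
  sup_norm_interpolation_besov_holder_general d r σ hr hσ
end
end
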